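/- Let λ₁, λ₂ ∈ ℂ∖{0} and b₁, b₂ ∈ ℂ∖{0, 1/2}. There exists a ℂ-linear bijection ψ : Q × Q → Q × Q that is grading-homogeneous (i.e., either ψ(Q×{0}) = Q×{0} and ψ({0}×Q) = {0}×Q, or ψ(Q×{0}) = {0}×Q and ψ({0}×Q) = Q×{0}) and satisfies ψ ∘ L_m^{(λ₁,b₁)} = L_m^{(λ₂,b₂)} ∘ ψ and ψ ∘ G_m^{(λ₁,b₁)} = G_m^{(λ₂,b₂)} ∘ ψ for all m ∈ ℤ, if and only if λ₁ = λ₂ and b₁ = b₂. (Here superscripts indicate the operators of Ω_ℛ(λ₁,b₁) and Ω_ℛ(λ₂,b₂).) -/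

import Mathlib

/-!
`L_0` is multiplication by `X` on both components, so an intertwiner `ψ` is `ℂ[X]`-linear and maps
`ℂ[X] × 0` onto the multiples of `ψ (1, 0)`. If `ψ` preserves the grading, then
`ψ (1, 0) = (C r, 0)` with `r ≠ 0`, and comparing `ψ (L_1 (1, 0))` with `L_1 (ψ (1, 0))` forces
`λ₁ = λ₂` and `b₁ = b₂`. If `ψ` swaps the grading, the second component `u` of `ψ (1, 0)` is a
unit, while `ψ (G_0 (1, 0)) = X • ψ (0, 1)` and `G_0 (ψ (1, 0))` have first components
`X * (ψ (0, 1)).1` and `-u`, so `X` would be a unit.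
-/
open Polynomial

noncomputable section

abbrev Qp := Polynomial ℂ

/-- `L_m(p,q) = (λ^m(x+m(b−1))·p(x−m), λ^m(x+m(b−1/2))·q(x−m))` -/
def OL (lam b : ℂ) (m : ℤ) : Qp × Qp → Qp × Qp :=
  fun w => (lam ^ m • ((X + C ((m : ℂ) * (b - 1))) * w.1.comp (X - C (m : ℂ))),
            lam ^ m • ((X + C ((m : ℂ) * (b - 1 / 2))) * w.2.comp (X - C (m : ℂ))))

/-- `G_m(p,q) = (−λ^m·q(x−m), λ^m(x+m(2b−1))·p(x−m))` -/
def OG (lam b : ℂ) (m : ℤ) : Qp × Qp → Qp × Qp :=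
  fun w => (-(lam ^ m • w.2.comp (X - C (m : ℂ))),
            lam ^ m • ((X + C ((m : ℂ) * (2 * b - 1))) * w.1.comp (X - C (m : ℂ))))

theorem Polynomial.map_smul_of_map_X_smul {R M N : Type*} [CommSemiring R]
    [AddCommMonoid M] [AddCommMonoid N] [Module R M] [Module R N] [Module R[X] M] [Module R[X] N]
    [IsScalarTower R R[X] M] [IsScalarTower R R[X] N]
    (f : M →ₗ[R] N) (hX : ∀ m, f ((X : R[X]) • m) = (X : R[X]) • f m) (p : R[X]) (m : M) :
    f (p • m) = p • f m := by
  have hXpow : ∀ (n : ℕ) (m : M), f ((X : R[X]) ^ n • m) = (X : R[X]) ^ n • f m := by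
    intro n
    induction n with
    | zero => simp
    | succ n ih => intro m; rw [pow_succ, mul_smul, mul_smul, ih, hX]
  induction p using Polynomial.induction_on' with
  | add p q hp hq => rw [add_smul, add_smul, map_add, hp, hq]
  | monomial n a =>
    rw [← C_mul_X_pow_eq_monomial, mul_smul, mul_smul, ← algebraMap_eq, algebraMap_smul,
      algebraMap_smul, map_smul, hXpow]

section ProdSmul

variable {S : Type*} [CommSemiring S]

theorem image_setOf_snd_eq_zero {M : Type*} [SMul S M] {f : S × S → M}
    (hf : ∀ (p : S) (w : S × S), f (p • w) = p • f w) :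
    f '' {w : S × S | w.2 = 0} = Set.range (fun p : S => p • f (1, 0)) := by
  have hline : {w : S × S | w.2 = 0} = Set.range (fun p : S => p • ((1 : S), (0 : S))) := by
    ext ⟨p, q⟩
    simp [eq_comm]
  rw [hline, ← Set.range_comp]
  exact congrArg Set.range (funext fun p => hf p (1, 0))

theorem isUnit_fst_of_range_smul_eq_setOf_snd_eq_zero {a : S × S}
    (h : Set.range (fun p : S => p • a) = {w : S × S | w.2 = 0}) : IsUnit a.1 ∧ a.2 = 0 := by
  have hone : ((1 : S), (0 : S)) ∈ Set.range (fun p : S => p • a) := by rw [h]; rfl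
  obtain ⟨p, hp⟩ := hone
  have ha : a ∈ Set.range (fun p : S => p • a) := ⟨1, one_smul S a⟩
  rw [h] at ha
  exact ⟨IsUnit.of_mul_eq_one_right p (congrArg Prod.fst hp), ha⟩

theorem isUnit_snd_of_range_smul_eq_setOf_fst_eq_zero {a : S × S}
    (h : Set.range (fun p : S => p • a) = {w : S × S | w.1 = 0}) : IsUnit a.2 := by
  have hone : ((0 : S), (1 : S)) ∈ Set.range (fun p : S => p • a) := by rw [h]; rfl
  obtain ⟨p, hp⟩ := hone
  exact IsUnit.of_mul_eq_one_right p (congrArg Prod.snd hp)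

end ProdSmul

theorem Polynomial.eq_of_C_mul_X_add_C_eq {R : Type*} [Semiring R] {a b c d : R}
    (h : C a * (X + C b) = C c * (X + C d)) : a = c ∧ a * b = c * d := by
  constructor
  · simpa using congrArg (fun p : R[X] => p.coeff 1) h
  · simpa using congrArg (fun p : R[X] => p.coeff 0) h

theorem OL_zero (lam b : ℂ) (w : Qp × Qp) : OL lam b 0 w = (X : Qp) • w := by
  ext <;> simp [OL]

theorem OL_one_C (lam b r : ℂ) : OL lam b 1 (C r, 0) = (C (lam * r) * (X + C (b - 1)), 0) := by
  simp only [OL, zpow_one, Int.cast_one, one_mul, C_comp, zero_comp, mul_zero, smul_zero,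
    C_mul, smul_eq_C_mul]
  ring_nf

theorem OG_zero (lam b : ℂ) (w : Qp × Qp) : OG lam b 0 w = (-w.2, X * w.1) := by
  simp [OG]

section Intertwiner

variable {lam₁ lam₂ b₁ b₂ : ℂ} {ψ : Qp × Qp → Qp × Qp}
  (hψ : ∀ (p : Qp) (w : Qp × Qp), ψ (p • w) = p • ψ w)
include hψ

theorem eq_of_intertwines_OL_one (hlam₁ : lam₁ ≠ 0) {r : ℂ} (hr : r ≠ 0)
    (hψ₁ : ψ (1, 0) = (C r, 0)) (hL : ψ (OL lam₁ b₁ 1 (1, 0)) = OL lam₂ b₂ 1 (ψ (1, 0))) :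
    lam₁ = lam₂ ∧ b₁ = b₂ := by
  have hsmul : ((C lam₁ * (X + C (b₁ - 1)), 0) : Qp × Qp) =
      (C lam₁ * (X + C (b₁ - 1))) • ((1 : Qp), (0 : Qp)) := by
    simp
  have hfst : C (lam₁ * r) * (X + C (b₁ - 1)) = C (lam₂ * r) * (X + C (b₂ - 1)) := by
    rw [hψ₁, OL_one_C, ← C_1, OL_one_C, mul_one, hsmul, hψ, hψ₁, Prod.smul_mk, smul_eq_mul,
      Prod.mk.injEq, mul_right_comm, ← C_mul] at hL
    exact hL.1
  obtain ⟨hlam, hb⟩ := eq_of_C_mul_X_add_C_eq hfst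
  obtain rfl : lam₁ = lam₂ := mul_right_cancel₀ hr hlam
  exact ⟨rfl, by simpa using mul_left_cancel₀ (mul_ne_zero hlam₁ hr) hb⟩

theorem not_isUnit_snd_of_intertwines_OG_zero
    (hG : ψ (OG lam₁ b₁ 0 (1, 0)) = OG lam₂ b₂ 0 (ψ (1, 0))) : ¬ IsUnit (ψ (1, 0)).2 := by
  intro hunit
  have hX : ψ (0, X) = (X : Qp) • ψ (0, 1) := by simpa using hψ X (0, 1)
  simp only [OG_zero, neg_zero, mul_one, hX] at hG
  have hXunit : IsUnit (X * (ψ (0, 1)).1) := by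
    rw [← smul_eq_mul, ← Prod.smul_fst, hG]
    exact hunit.neg
  exact not_isUnit_X (isUnit_of_mul_isUnit_left hXunit)

end Intertwiner

theorem stmt14_general (lam₁ lam₂ : ℂ) (h₁ : lam₁ ≠ 0)
    (b₁ b₂ : ℂ) :
    (∃ ψ : (Qp × Qp) ≃ₗ[ℂ] (Qp × Qp),
        ((⇑ψ '' {w : Qp × Qp | w.2 = 0} = {w : Qp × Qp | w.2 = 0} ∧
          ⇑ψ '' {w : Qp × Qp | w.1 = 0} = {w : Qp × Qp | w.1 = 0}) ∨
         (⇑ψ '' {w : Qp × Qp | w.2 = 0} = {w : Qp × Qp | w.1 = 0} ∧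
          ⇑ψ '' {w : Qp × Qp | w.1 = 0} = {w : Qp × Qp | w.2 = 0})) ∧
        (∀ m : ℤ, ∀ w : Qp × Qp, ψ (OL lam₁ b₁ m w) = OL lam₂ b₂ m (ψ w)) ∧
        (∀ m : ℤ, ∀ w : Qp × Qp, ψ (OG lam₁ b₁ m w) = OG lam₂ b₂ m (ψ w))) ↔
      (lam₁ = lam₂ ∧ b₁ = b₂) := by
  constructor
  · rintro ⟨ψ, hgrad, hL, hG⟩
    have hψ : ∀ (p : Qp) (w : Qp × Qp), ψ (p • w) = p • ψ w :=
      map_smul_of_map_X_smul ψ.toLinearMap fun w => by simpa [OL_zero] using hL 0 w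
    rcases hgrad with ⟨hdiag, -⟩ | ⟨hswap, -⟩
    · rw [image_setOf_snd_eq_zero hψ] at hdiag
      obtain ⟨hunit, hsnd⟩ := isUnit_fst_of_range_smul_eq_setOf_snd_eq_zero hdiag
      obtain ⟨r, hr, hfst⟩ := Polynomial.isUnit_iff.mp hunit
      exact eq_of_intertwines_OL_one hψ h₁ hr.ne_zero (Prod.ext hfst.symm hsnd) (hL 1 _)
    · rw [image_setOf_snd_eq_zero hψ] at hswap
      exact absurd (isUnit_snd_of_range_smul_eq_setOf_fst_eq_zero hswap)
        (not_isUnit_snd_of_intertwines_OG_zero hψ (hG 0 _))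
  · rintro ⟨rfl, rfl⟩
    exact ⟨LinearEquiv.refl ℂ _, Or.inl ⟨Set.image_id _, Set.image_id _⟩,
      fun _ _ => rfl, fun _ _ => rfl⟩

theorem stmt14 (lam₁ lam₂ : ℂ) (h₁ : lam₁ ≠ 0) (h₂ : lam₂ ≠ 0)
    (b₁ b₂ : ℂ) (hb₁ : b₁ ≠ 0 ∧ b₁ ≠ 1 / 2) (hb₂ : b₂ ≠ 0 ∧ b₂ ≠ 1 / 2) :
    (∃ ψ : (Qp × Qp) ≃ₗ[ℂ] (Qp × Qp),
        ((⇑ψ '' {w : Qp × Qp | w.2 = 0} = {w : Qp × Qp | w.2 = 0} ∧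
          ⇑ψ '' {w : Qp × Qp | w.1 = 0} = {w : Qp × Qp | w.1 = 0}) ∨
         (⇑ψ '' {w : Qp × Qp | w.2 = 0} = {w : Qp × Qp | w.1 = 0} ∧
          ⇑ψ '' {w : Qp × Qp | w.1 = 0} = {w : Qp × Qp | w.2 = 0})) ∧
        (∀ m : ℤ, ∀ w : Qp × Qp, ψ (OL lam₁ b₁ m w) = OL lam₂ b₂ m (ψ w)) ∧
        (∀ m : ℤ, ∀ w : Qp × Qp, ψ (OG lam₁ b₁ m w) = OG lam₂ b₂ m (ψ w))) ↔
      (lam₁ = lam₂ ∧ b₁ = b₂) :=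
  stmt14_general lam₁ lam₂ h₁ b₁ b₂

end
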